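/- arXiv:2312.04740 — 2 statements merged into one kernel-verified Lean document; each statement's English description precedes it below -/
import Mathlib

section
/- (No-Buy, Sell performance ratio bounds) Let θ̇_a, θ̇_b, θ* ∈ ℝ^d with θ̇_a ≠ θ*, α, β ∈ (0,1], θ̄_a = (1−α)θ̇_a + αθ̇_b with θ̄_a ≠ θ*, θ̄_b = (1−β)θ̇_b + βθ̇_a, and Δ_a = ‖θ̇_a − θ*‖²/‖θ̄_a − θ*‖². If (1−β)(1/(α√Δ_a) − (1−α)/α) − β ≥ 0, then [(1−β)(1/(α√Δ_a) − (1−α)/α) − β]² ≤ ‖θ̄_b − θ*‖²/‖θ̇_a − θ*‖² ≤ [(1−β)(1/(α√Δ_a) + (1−α)/α) + β]². -/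
/-- (No-Buy, Sell) performance ratio bounds. -/
theorem perf_ratio_nobuy_sell {d : ℕ}
    (θa θb θstar θbara θbarb : EuclideanSpace ℝ (Fin d)) (α β Δa : ℝ)
    (hα : α ∈ Set.Ioc (0 : ℝ) 1) (hβ : β ∈ Set.Ioc (0 : ℝ) 1)
    (hbara : θbara = (1 - α) • θa + α • θb)
    (hbarb : θbarb = (1 - β) • θb + β • θa)
    (ha : θa ≠ θstar) (hbarane : θbara ≠ θstar)
    (hΔ : Δa = ‖θa - θstar‖ ^ 2 / ‖θbara - θstar‖ ^ 2)
    (hlb : 0 ≤ (1 - β) * (1 / (α * Real.sqrt Δa) - (1 - α) / α) - β) :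
    ((1 - β) * (1 / (α * Real.sqrt Δa) - (1 - α) / α) - β) ^ 2
      ≤ ‖θbarb - θstar‖ ^ 2 / ‖θa - θstar‖ ^ 2 ∧
    ‖θbarb - θstar‖ ^ 2 / ‖θa - θstar‖ ^ 2
      ≤ ((1 - β) * (1 / (α * Real.sqrt Δa) + (1 - α) / α) + β) ^ 2 := by
  obtain ⟨hα0, hα1⟩ := hα
  obtain ⟨hβ0, hβ1⟩ := hβ
  have hne : α ≠ 0 := ne_of_gt hα0
  have hna : (0:ℝ) < ‖θa - θstar‖ := by
    simpa [sub_eq_zero] using norm_pos_iff.mpr (sub_ne_zero.mpr ha)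
  have hnb : (0:ℝ) < ‖θbara - θstar‖ := by
    simpa [sub_eq_zero] using norm_pos_iff.mpr (sub_ne_zero.mpr hbarane)
  set na := ‖θa - θstar‖ with hna_def
  set nb := ‖θbara - θstar‖ with hnb_def
  have hs : Real.sqrt Δa = na / nb := by
    rw [hΔ, ← div_pow]
    exact Real.sqrt_sq (by positivity)
  have hspos : 0 < Real.sqrt Δa := by rw [hs]; positivity
  set s := Real.sqrt Δa with hs_def
  -- key decomposition
  have key : θbarb - θstar =
      ((1 - β)/α) • (θbara - θstar) + (β - (1 - β)*(1 - α)/α) • (θa - θstar) := by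
    rw [hbara, hbarb]
    match_scalars <;> field_simp <;> ring
  have hnb_eq : nb = na / s := by
    rw [hs]; field_simp
  -- norms of the two pieces
  have h1 : ‖((1 - β)/α) • (θbara - θstar)‖ = (1 - β)/(α*s) * na := by
    rw [norm_smul, Real.norm_eq_abs, abs_of_nonneg (div_nonneg (by linarith) hα0.le : (0:ℝ) ≤ (1-β)/α),
      ← hnb_def, hnb_eq]
    ring
  have h2 : ‖(β - (1 - β)*(1 - α)/α) • (θa - θstar)‖ ≤ ((1 - β)*(1 - α)/α + β) * na := by
    rw [norm_smul, Real.norm_eq_abs, ← hna_def]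
    have : |β - (1 - β)*(1 - α)/α| ≤ (1 - β)*(1 - α)/α + β := by
      rw [abs_sub_le_iff]
      constructor <;> nlinarith [div_nonneg (mul_nonneg (by linarith : (0:ℝ) ≤ 1-β) (by linarith : (0:ℝ) ≤ 1-α)) hα0.le]
    exact mul_le_mul_of_nonneg_right this hna.le
  set L := (1 - β) * (1 / (α * s) - (1 - α) / α) - β with hL
  set U := (1 - β) * (1 / (α * s) + (1 - α) / α) + β with hU
  have hLr : L = (1 - β)/(α*s) - ((1 - β)*(1 - α)/α + β) := by rw [hL]; ring
  have hUr : U = (1 - β)/(α*s) + ((1 - β)*(1 - α)/α + β) := by rw [hU]; ring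
  have hub : ‖θbarb - θstar‖ ≤ U * na := by
    calc ‖θbarb - θstar‖ ≤ ‖((1 - β)/α) • (θbara - θstar)‖ +
          ‖(β - (1 - β)*(1 - α)/α) • (θa - θstar)‖ := by rw [key]; exact norm_add_le _ _
      _ ≤ (1 - β)/(α*s) * na + ((1 - β)*(1 - α)/α + β) * na := by rw [h1]; linarith
      _ = U * na := by rw [hUr]; ring
  have hlbn : L * na ≤ ‖θbarb - θstar‖ := by
    have := norm_sub_norm_le (((1 - β)/α) • (θbara - θstar)) (-((β - (1 - β)*(1 - α)/α) • (θa - θstar)))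
    rw [sub_neg_eq_add, norm_neg, ← key, h1] at this
    calc L * na = (1 - β)/(α*s) * na - ((1 - β)*(1 - α)/α + β) * na := by rw [hLr]; ring
      _ ≤ (1 - β)/(α*s) * na - ‖(β - (1 - β)*(1 - α)/α) • (θa - θstar)‖ := by linarith
      _ ≤ ‖θbarb - θstar‖ := this
  have hratio : ‖θbarb - θstar‖ ^ 2 / na ^ 2 = (‖θbarb - θstar‖ / na) ^ 2 := by
    rw [div_pow]
  rw [hratio]
  constructor
  · have : L ≤ ‖θbarb - θstar‖ / na := (le_div_iff₀ hna).mpr hlbn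
    exact pow_le_pow_left₀ hlb this 2
  · have h0 : 0 ≤ ‖θbarb - θstar‖ / na := by positivity
    have : ‖θbarb - θstar‖ / na ≤ U := (div_le_iff₀ hna).mpr hub
    exact pow_le_pow_left₀ h0 this 2
end

section
/- (Bounds on buyer's gain-from-trade) Let θ̇_a, θ̇_b, θ* ∈ ℝ^d, α, β ∈ (0,1], θ̄_a = (1−α)θ̇_a + αθ̇_b, θ̄_b = (1−β)θ̇_b + βθ̇_a, all distinct from θ* as needed for the ratios to be defined. Let Δ_a = ‖θ̇_a − θ*‖²/‖θ̄_a − θ*‖² and Δ_b = ‖θ̇_b − θ*‖²/‖θ̄_b − θ*‖². Assume (1−β) − √Δ_a (1−α−β+2αβ) > 0 and 1 − √Δ_a(1−α) ≥ 0. Then [(1 − √Δ_a(1−α)) / ((1−β) + √Δ_a(1−α−β+2αβ))]² ≤ Δ_b ≤ [(1 + √Δ_a(1−α)) / ((1−β) − √Δ_a(1−α−β+2αβ))]². -/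
set_option maxHeartbeats 1000000 in
/-- Bounds on the buyer's gain-from-trade in terms of the seller's
gain-from-trade and the purchase weights. -/
theorem bounds_on_buyers_gain_from_trade {d : ℕ}
    (θa θb θstar θbara θbarb : EuclideanSpace ℝ (Fin d)) (α β Δa Δb : ℝ)
    (hα : α ∈ Set.Ioc (0 : ℝ) 1) (hβ : β ∈ Set.Ioc (0 : ℝ) 1)
    (hbara : θbara = (1 - α) • θa + α • θb)
    (hbarb : θbarb = (1 - β) • θb + β • θa)
    (ha : θa ≠ θstar) (hb : θb ≠ θstar)
    (hbarane : θbara ≠ θstar) (hbarbne : θbarb ≠ θstar)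
    (hΔa : Δa = ‖θa - θstar‖ ^ 2 / ‖θbara - θstar‖ ^ 2)
    (hΔb : Δb = ‖θb - θstar‖ ^ 2 / ‖θbarb - θstar‖ ^ 2)
    (hden : 0 < (1 - β) - Real.sqrt Δa * (1 - α - β + 2 * α * β))
    (hnum : 0 ≤ 1 - Real.sqrt Δa * (1 - α)) :
    ((1 - Real.sqrt Δa * (1 - α)) /
        ((1 - β) + Real.sqrt Δa * (1 - α - β + 2 * α * β))) ^ 2 ≤ Δb ∧
    Δb ≤ ((1 + Real.sqrt Δa * (1 - α)) /
        ((1 - β) - Real.sqrt Δa * (1 - α - β + 2 * α * β))) ^ 2 := by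
  obtain ⟨hα0, hα1⟩ := hα
  obtain ⟨hβ0, hβ1⟩ := hβ
  set u := θa - θstar with hu
  set v := θb - θstar with hv
  set w := θbara - θstar with hw
  set z := θbarb - θstar with hz
  have hx : (0:ℝ) < ‖u‖ := norm_pos_iff.mpr (sub_ne_zero.mpr ha)
  have hy : (0:ℝ) < ‖v‖ := norm_pos_iff.mpr (sub_ne_zero.mpr hb)
  have hA : (0:ℝ) < ‖w‖ := norm_pos_iff.mpr (sub_ne_zero.mpr hbarane)
  have hB : (0:ℝ) < ‖z‖ := norm_pos_iff.mpr (sub_ne_zero.mpr hbarbne)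
  set x := ‖u‖
  set y := ‖v‖
  set A := ‖w‖
  set B := ‖z‖
  set c : ℝ := 1 - α - β + 2 * α * β with hcdef
  -- vector identities
  have hwv : α • v = w - (1 - α) • u := by
    simp only [hu, hv, hw, hbara]; module
  have hwv' : w = (1 - α) • u + α • v := by rw [hwv]; module
  have hzv : α • z = (1 - β) • w + (α + β - 1) • u := by
    simp only [hu, hw, hz, hbara, hbarb]; module
  have hzv' : (1 - β) • w = α • z - (α + β - 1) • u := by rw [hzv]; module
  -- norms of scalar multiples
  have nαv : ‖α • v‖ = α * y := by
    rw [norm_smul, Real.norm_eq_abs, abs_of_pos hα0]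
  have nαz : ‖α • z‖ = α * B := by
    rw [norm_smul, Real.norm_eq_abs, abs_of_pos hα0]
  have nu1 : ‖(1 - α) • u‖ = (1 - α) * x := by
    rw [norm_smul, Real.norm_eq_abs, abs_of_nonneg (by linarith)]
  have nw1 : ‖(1 - β) • w‖ = (1 - β) * A := by
    rw [norm_smul, Real.norm_eq_abs, abs_of_nonneg (by linarith)]
  have nuc : ‖(α + β - 1) • u‖ = |α + β - 1| * x := by
    rw [norm_smul, Real.norm_eq_abs]
  -- triangle inequalities
  have t1 : α * y ≤ A + (1 - α) * x := by
    calc α * y = ‖w - (1 - α) • u‖ := by rw [← nαv, hwv]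
    _ ≤ ‖w‖ + ‖(1 - α) • u‖ := norm_sub_le _ _
    _ = A + (1 - α) * x := by rw [nu1]
  have t2 : A - (1 - α) * x ≤ α * y := by
    have : A ≤ (1 - α) * x + α * y := by
      calc A = ‖(1 - α) • u + α • v‖ := by rw [← hwv']
      _ ≤ ‖(1 - α) • u‖ + ‖α • v‖ := norm_add_le _ _
      _ = (1 - α) * x + α * y := by rw [nu1, nαv]
    linarith
  have t3 : α * B ≤ (1 - β) * A + |α + β - 1| * x := by
    calc α * B = ‖(1 - β) • w + (α + β - 1) • u‖ := by rw [← nαz, hzv]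
    _ ≤ ‖(1 - β) • w‖ + ‖(α + β - 1) • u‖ := norm_add_le _ _
    _ = (1 - β) * A + |α + β - 1| * x := by rw [nw1, nuc]
  have t4 : (1 - β) * A - |α + β - 1| * x ≤ α * B := by
    have : (1 - β) * A ≤ α * B + |α + β - 1| * x := by
      calc (1 - β) * A = ‖α • z - (α + β - 1) • u‖ := by rw [← nw1, hzv']
      _ ≤ ‖α • z‖ + ‖(α + β - 1) • u‖ := norm_sub_le _ _
      _ = α * B + |α + β - 1| * x := by rw [nαz, nuc]
    linarith
  clear_value x y A B c
  clear hwv hwv' hzv hzv' nαv nαz nu1 nw1 nuc hu hv hw hz hbara hbarb ha hb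
    hbarane hbarbne u v w z θa θb θstar θbara θbarb
  have haux1 : (0:ℝ) ≤ (1 - α) * (1 - β) := by nlinarith
  have haux2 : (0:ℝ) < α * β := mul_pos hα0 hβ0
  have hcabs : |α + β - 1| ≤ c := by
    rw [abs_le]; constructor <;> nlinarith
  have hc0 : 0 ≤ c := le_trans (abs_nonneg _) hcabs
  -- sqrt identities
  have hsa : Real.sqrt Δa = x / A := by
    rw [hΔa, ← div_pow, Real.sqrt_sq (by positivity)]
  have hΔb' : Δb = (y / B) ^ 2 := by rw [hΔb, ← div_pow]
  rw [hsa] at hden hnum ⊢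
  -- translate hden, hnum
  have hden' : 0 < (1 - β) * A - c * x := by
    have := mul_pos hden hA
    have hAne : A ≠ 0 := ne_of_gt hA
    field_simp at this
    nlinarith
  have hnum' : 0 ≤ A - (1 - α) * x := by
    have := mul_nonneg hnum hA.le
    have hAne : A ≠ 0 := ne_of_gt hA
    field_simp at this
    nlinarith
  -- bounds combining
  have t3' : α * B ≤ (1 - β) * A + c * x := by
    have := mul_le_mul_of_nonneg_right hcabs hx.le
    linarith
  have t4' : (1 - β) * A - c * x ≤ α * B := by
    have := mul_le_mul_of_nonneg_right hcabs hx.le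
    linarith
  have hdpos2 : (0:ℝ) < (1 - β) * A + c * x := by nlinarith
  -- ratio bounds
  have lower : (A - (1 - α) * x) / ((1 - β) * A + c * x) ≤ y / B := by
    rw [div_le_div_iff₀ hdpos2 hB]
    nlinarith [mul_pos hα0 hy, mul_nonneg hnum' hB.le]
  have upper : y / B ≤ (A + (1 - α) * x) / ((1 - β) * A - c * x) := by
    rw [div_le_div_iff₀ hB hden']
    nlinarith [mul_pos hα0 hB, mul_nonneg (mul_pos hα0 hy).le hc0]
  constructor
  · rw [hΔb']
    have hp1 : 0 < (1 - β) + x / A * c := by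
      have ht : 0 ≤ x / A * c := mul_nonneg (div_nonneg hx.le hA.le) hc0
      linarith
    have heq : (1 - x / A * (1 - α)) / ((1 - β) + x / A * c) =
        (A - (1 - α) * x) / ((1 - β) * A + c * x) := by
      rw [div_eq_div_iff hp1.ne' hdpos2.ne']
      field_simp
    rw [heq]
    exact pow_le_pow_left₀ (by positivity) lower 2
  · rw [hΔb']
    have heq : (1 + x / A * (1 - α)) / ((1 - β) - x / A * c) =
        (A + (1 - α) * x) / ((1 - β) * A - c * x) := by
      rw [div_eq_div_iff hden.ne' hden'.ne']
      field_simp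
    rw [heq]
    exact pow_le_pow_left₀ (by positivity) upper 2
end
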